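/- The function g(δ) = (1-δ)·[Φ((1/3)(y_δ + 2√(y_δ²+6 ln 2))) - Φ((1/3)(2 y_δ + √(y_δ²+6 ln 2)))], where y_δ = Φ⁻¹(δ/(1-δ)), is strictly decreasing for δ ∈ (0, 1/3). Consequently, δ < g(δ) if and only if δ < ε₀, where ε₀ is the unique fixed point of g. -/

import Mathlib

open MeasureTheory ProbabilityTheory

/-- The standard normal cumulative distribution function. -/
noncomputable def Phi (x : ℝ) : ℝ := ((gaussianReal 0 1) (Set.Iic x)).toReal

/-- The inverse of the standard normal CDF. -/
noncomputable def PhiInv : ℝ → ℝ := Function.invFun Phi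

/-- The normal quantile `y_δ = Φ⁻¹(δ/(1-δ))`. -/
noncomputable def yq (δ : ℝ) : ℝ := PhiInv (δ / (1 - δ))

/-- The function `g` from the location-scale breakdown analysis. -/
noncomputable def gfun (δ : ℝ) : ℝ :=
  (1 - δ) *
    (Phi ((yq δ + 2 * Real.sqrt (yq δ ^ 2 + 6 * Real.log 2)) / 3) -
      Phi ((2 * yq δ + Real.sqrt (yq δ ^ 2 + 6 * Real.log 2)) / 3))

/-!
Write `s = √(y² + 6 log 2)`, `a = (y + 2s)/3` and `b = (2y + s)/3`, so that `g(δ) = (1 - δ) G(y_δ)`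
with `G(y) = Φ(a) - Φ(b) > 0`. Since `a² - b² = (s² - y²)/3 = 2 log 2`, the normal density
satisfies `φ(b) = 2 φ(a)`, and the derivative `φ(a) a' - φ(b) b'` of `G` collapses to `-φ(a) < 0`.
So `G` is decreasing, `δ ↦ y_δ` is increasing, and `g` is a product of two positive decreasing
factors on `(0, 1/2)`. The comparison with the fixed point is then formal.
-/

open Set Real Function

lemma StrictAntiOn.lt_apply_iff_lt_of_isFixedPt {α : Type*} [LinearOrder α] {f : α → α}
    {s : Set α} (hf : StrictAntiOn f s) {a x : α} (ha : a ∈ s) (hfa : IsFixedPt f a)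
    (hx : x ∈ s) : x < f x ↔ x < a := by
  constructor
  · intro hlt
    by_contra! hax
    exact (hlt.trans_le ((hf.antitoneOn ha hx hax).trans_eq hfa)).not_ge hax
  · intro hlt
    calc x < a := hlt
      _ = f a := hfa.symm
      _ < f x := hf hx ha hlt

lemma continuous_gaussianPDFReal (μ : ℝ) (v : NNReal) : Continuous (gaussianPDFReal μ v) := by
  unfold gaussianPDFReal
  fun_prop

lemma hasDerivAt_cdf_gaussianReal (μ : ℝ) {v : NNReal} (hv : v ≠ 0) (x : ℝ) :
    HasDerivAt (cdf (gaussianReal μ v)) (gaussianPDFReal μ v x) x := by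
  have hint := integrable_gaussianPDFReal μ v
  have hcdf : cdf (gaussianReal μ v) =
      fun u ↦ cdf (gaussianReal μ v) 0 + ∫ t in (0 : ℝ)..u, gaussianPDFReal μ v t := by
    funext u
    simp only [cdf_eq_real, measureReal_def, gaussianReal_apply_eq_integral μ hv,
      ENNReal.toReal_ofReal (integral_nonneg fun t ↦ gaussianPDFReal_nonneg μ v t)]
    rw [← intervalIntegral.integral_Iic_sub_Iic hint.integrableOn hint.integrableOn]
    ring
  rw [hcdf]
  exact (intervalIntegral.integral_hasDerivAt_right hint.intervalIntegrable
    (continuous_gaussianPDFReal μ v).stronglyMeasurable.stronglyMeasurableAtFilter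
    (continuous_gaussianPDFReal μ v).continuousAt).const_add _

lemma gaussianPDFReal_zero_one_eq_exp_mul (a b : ℝ) :
    gaussianPDFReal 0 1 b = exp ((a ^ 2 - b ^ 2) / 2) * gaussianPDFReal 0 1 a := by
  simp only [gaussianPDFReal, NNReal.coe_one, mul_one, sub_zero]
  rw [mul_left_comm, ← exp_add]
  ring_nf

lemma Phi_eq_cdf : Phi = cdf (gaussianReal 0 1) := by
  funext x
  rw [cdf_eq_real, measureReal_def, Phi]

lemma hasDerivAt_Phi (x : ℝ) : HasDerivAt Phi (gaussianPDFReal 0 1 x) x :=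
  Phi_eq_cdf ▸ hasDerivAt_cdf_gaussianReal 0 one_ne_zero x

lemma continuous_Phi : Continuous Phi :=
  continuous_iff_continuousAt.2 fun x ↦ (hasDerivAt_Phi x).continuousAt

lemma Phi_strictMono : StrictMono Phi :=
  strictMono_of_hasDerivAt_pos hasDerivAt_Phi fun x ↦ gaussianPDFReal_pos 0 1 x one_ne_zero

lemma Phi_PhiInv {p : ℝ} (hp : p ∈ Ioo 0 1) : Phi (PhiInv p) = p := by
  refine invFun_eq ?_
  obtain ⟨a, ha⟩ := (Phi_eq_cdf ▸ tendsto_cdf_atBot _ |>.eventually_lt_const hp.1).exists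
  obtain ⟨b, hb⟩ := (Phi_eq_cdf ▸ tendsto_cdf_atTop _ |>.eventually_const_lt hp.2).exists
  exact intermediate_value_univ a b continuous_Phi ⟨ha.le, hb.le⟩

lemma PhiInv_strictMonoOn : StrictMonoOn PhiInv (Ioo 0 1) := fun p hp q hq hpq ↦
  Phi_strictMono.lt_iff_lt.1 <| by rwa [Phi_PhiInv hp, Phi_PhiInv hq]

lemma div_one_sub_mem_Ioo {δ : ℝ} (hδ : δ ∈ Ioo 0 (1 / 2)) : δ / (1 - δ) ∈ Ioo 0 1 := by
  have h : 0 < 1 - δ := by linarith [hδ.2]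
  exact ⟨div_pos hδ.1 h, (div_lt_one h).2 (by linarith [hδ.2])⟩

lemma yq_strictMonoOn : StrictMonoOn yq (Ioo 0 (1 / 2)) := by
  intro δ₁ h₁ δ₂ h₂ hlt
  refine PhiInv_strictMonoOn (div_one_sub_mem_Ioo h₁) (div_one_sub_mem_Ioo h₂) ?_
  rw [div_lt_div_iff₀ (by linarith [h₁.2]) (by linarith [h₂.2])]
  nlinarith

noncomputable def spread (y : ℝ) : ℝ := √(y ^ 2 + 6 * log 2)

lemma sq_spread (y : ℝ) : spread y ^ 2 = y ^ 2 + 6 * log 2 :=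
  sq_sqrt (by positivity)

lemma lt_spread (y : ℝ) : y < spread y :=
  lt_sqrt_of_sq_lt (by linarith [log_pos one_lt_two])

lemma spread_pos (y : ℝ) : 0 < spread y :=
  sqrt_pos.2 (by positivity)

lemma hasDerivAt_spread (y : ℝ) : HasDerivAt spread (y / spread y) y := by
  have h := ((hasDerivAt_pow 2 y).add_const (6 * log 2)).sqrt (by positivity)
  refine h.congr_deriv ?_
  rw [spread]
  field_simp
  norm_num

lemma gaussianPDFReal_eq_two_mul (y : ℝ) :
    gaussianPDFReal 0 1 ((2 * y + spread y) / 3) =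
      2 * gaussianPDFReal 0 1 ((y + 2 * spread y) / 3) := by
  rw [gaussianPDFReal_zero_one_eq_exp_mul ((y + 2 * spread y) / 3)]
  have hsq : (((y + 2 * spread y) / 3) ^ 2 - ((2 * y + spread y) / 3) ^ 2) / 2 = log 2 := by
    linear_combination sq_spread y / 6
  rw [hsq, exp_log two_pos]

noncomputable def gap (y : ℝ) : ℝ :=
  Phi ((y + 2 * spread y) / 3) - Phi ((2 * y + spread y) / 3)

lemma gap_pos (y : ℝ) : 0 < gap y :=
  sub_pos.2 <| Phi_strictMono <| by linarith [lt_spread y]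

lemma hasDerivAt_gap (y : ℝ) :
    HasDerivAt gap (-gaussianPDFReal 0 1 ((y + 2 * spread y) / 3)) y := by
  have hs := hasDerivAt_spread y
  have hA := (hasDerivAt_Phi _).comp y (((hasDerivAt_id y).add (hs.const_mul 2)).div_const 3)
  have hB := (hasDerivAt_Phi _).comp y
    ((((hasDerivAt_id y).const_mul 2).add hs).div_const 3)
  refine (hA.sub hB).congr_deriv ?_
  simp only [Pi.add_apply, id, gaussianPDFReal_eq_two_mul]
  field_simp [(spread_pos y).ne']
  ring

lemma gap_strictAnti : StrictAnti gap :=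
  strictAnti_of_hasDerivAt_neg hasDerivAt_gap
    fun _ ↦ neg_lt_zero.2 (gaussianPDFReal_pos 0 1 _ one_ne_zero)

lemma gfun_eq (δ : ℝ) : gfun δ = (1 - δ) * gap (yq δ) := rfl

lemma gfun_strictAntiOn : StrictAntiOn gfun (Ioo 0 (1 / 2)) := by
  intro δ₁ h₁ δ₂ h₂ hlt
  rw [gfun_eq, gfun_eq]
  exact mul_lt_mul'' (by linarith) (gap_strictAnti (yq_strictMonoOn h₁ h₂ hlt))
    (by linarith [h₂.2]) (gap_pos _).le

/-- `g` is strictly decreasing on `(0, 1/3)`; consequently, for the fixed point `ε₀` of `g`,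
one has `δ < g δ` if and only if `δ < ε₀`. -/
theorem gfun_strictAntiOn_and_fixed_point :
    StrictAntiOn gfun (Set.Ioo (0 : ℝ) (1 / 3)) ∧
      ∀ ε₀ ∈ Set.Ioo (0 : ℝ) (1 / 3), gfun ε₀ = ε₀ →
        ∀ δ ∈ Set.Ioo (0 : ℝ) (1 / 3), (δ < gfun δ ↔ δ < ε₀) := by
  have hanti : StrictAntiOn gfun (Ioo 0 (1 / 3)) :=
    gfun_strictAntiOn.mono (Ioo_subset_Ioo_right (by norm_num))
  exact ⟨hanti, fun ε₀ hε₀ hfix δ hδ ↦ hanti.lt_apply_iff_lt_of_isFixedPt hε₀ hfix hδ⟩
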